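/- arXiv:1711.07795 — 2 statements merged into one kernel-verified Lean document; each statement's English description precedes it below -/
import Mathlib

section
/- Let X be a nonsingular BV algebra and let ξ, η be infinitesimal canonical maps of X with logarithmic Jacobians e_ξ, e_η. Then the commutator [ξ,η] = ξ∘η − η∘ξ is an infinitesimal canonical map of X, and ξ(e_η) − η(e_ξ) is a logarithmic Jacobian for [ξ,η]. -/
/-!
Common setup: real unital ℤ-graded (graded-)commutative algebras, BV Laplacians,
BV brackets, BV algebra structures, canonical maps and master actions.
-/

/-- Graded commutativity with Koszul signs: `f * g = (-1)^{|f||g|} g * f`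
for homogeneous `f`, `g`. -/
def GradedComm {X : Type*} [Ring X] [Algebra ℝ X] (𝒜 : ℤ → Submodule ℝ X) : Prop :=
  ∀ (i j : ℤ) (f g : X), f ∈ 𝒜 i → g ∈ 𝒜 j → f * g = ((-1 : ℝ) ^ (i * j)) • (g * f)

/-- `D` is a BV Laplacian on the ℤ-graded algebra `X` with grading `𝒜`:
it raises degree by `1`, is a second-order differential operator
(seven-term identity on homogeneous elements), squares to zero and kills `1`. -/
def IsBVLaplacian {X : Type*} [Ring X] [Algebra ℝ X]
    (𝒜 : ℤ → Submodule ℝ X) (D : X →ₗ[ℝ] X) : Prop :=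
  (∀ (i : ℤ) (f : X), f ∈ 𝒜 i → D f ∈ 𝒜 (i + 1)) ∧
  (∀ (i j k : ℤ) (f g h : X), f ∈ 𝒜 i → g ∈ 𝒜 j → h ∈ 𝒜 k →
    D (f * g * h) =
      -(D f * g * h) - ((-1 : ℝ) ^ i) • (f * D g * h)
        - ((-1 : ℝ) ^ (i + j)) • (f * g * D h)
        + D (f * g) * h + ((-1 : ℝ) ^ ((i + 1) * j)) • (g * D (f * h))
        + ((-1 : ℝ) ^ i) • (f * D (g * h))) ∧
  (∀ f : X, D (D f) = 0) ∧
  D 1 = 0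

/-- `Br` is the BV bracket associated with the Laplacian `D`: it is the bilinear
map given on homogeneous `f`, `g` by
`(f,g) = (-1)^{|f|} (D(fg) - (Df)g - (-1)^{|f|} f(Dg))`. -/
def IsBVBracketOf {X : Type*} [Ring X] [Algebra ℝ X]
    (𝒜 : ℤ → Submodule ℝ X) (D : X →ₗ[ℝ] X) (Br : X →ₗ[ℝ] X →ₗ[ℝ] X) : Prop :=
  ∀ (i j : ℤ) (f g : X), f ∈ 𝒜 i → g ∈ 𝒜 j →
    Br f g = ((-1 : ℝ) ^ i) • (D (f * g) - D f * g - ((-1 : ℝ) ^ i) • (f * D g))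

/-- A BV algebra structure on the ℤ-graded algebra `X` with grading `𝒜`:
graded commutativity, a BV Laplacian `Δ` and its associated BV bracket. -/
structure BVAlgebraStr (X : Type*) [Ring X] [Algebra ℝ X]
    (𝒜 : ℤ → Submodule ℝ X) where
  grcomm : GradedComm 𝒜
  Δ : X →ₗ[ℝ] X
  isBVLaplacian : IsBVLaplacian 𝒜 Δ
  bracket : X →ₗ[ℝ] X →ₗ[ℝ] X
  isBracket : IsBVBracketOf 𝒜 Δ bracket

/-- The bracket `Br` is nonsingular: its center is exactly `ℝ·1`. -/
def IsNonsingularBracket {X : Type*} [Ring X] [Algebra ℝ X]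
    (Br : X →ₗ[ℝ] X →ₗ[ℝ] X) : Prop :=
  ∀ c : X, (∀ f : X, Br f c = 0) ↔ ∃ r : ℝ, c = algebraMap ℝ X r

/-- `α` is a canonical map with logarithmic Jacobian `r`: a degree-preserving
isomorphism of unital algebras with `Δ_Y(αf) - α(Δ_X f) + (r, αf)_Y = 0`,
where `r` has degree `0`. -/
def IsCanonicalWithJacobian {X Y : Type*} [Ring X] [Algebra ℝ X] [Ring Y] [Algebra ℝ Y]
    (𝒜 : ℤ → Submodule ℝ X) (ℬ : ℤ → Submodule ℝ Y)
    (ΔX : X →ₗ[ℝ] X) (ΔY : Y →ₗ[ℝ] Y) (BrY : Y →ₗ[ℝ] Y →ₗ[ℝ] Y)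
    (α : X ≃ₐ[ℝ] Y) (r : Y) : Prop :=
  (∀ (i : ℤ) (f : X), f ∈ 𝒜 i → α f ∈ ℬ i) ∧ r ∈ ℬ 0 ∧
  (∀ f : X, ΔY (α f) - α (ΔX f) + BrY r (α f) = 0)

/-- `ξ` is an infinitesimal canonical map with logarithmic Jacobian `e`:
a degree-`0` derivation with `Δ(ξf) - ξ(Δf) + (e, f) = 0`, `e` of degree `0`. -/
def IsInfCanonicalWithJacobian {X : Type*} [Ring X] [Algebra ℝ X]
    {𝒜 : ℤ → Submodule ℝ X} (B : BVAlgebraStr X 𝒜)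
    (ξ : X →ₗ[ℝ] X) (e : X) : Prop :=
  (∀ (i : ℤ) (f : X), f ∈ 𝒜 i → ξ f ∈ 𝒜 i) ∧
  (∀ f g : X, ξ (f * g) = ξ f * g + f * ξ g) ∧
  e ∈ 𝒜 0 ∧
  (∀ f : X, B.Δ (ξ f) - ξ (B.Δ f) + B.bracket e f = 0)

/-- `S` is a BV quantum master action: a degree-`0` element satisfying the
quantum master equation `ΔS + (1/2)(S,S) = 0`. -/
def IsMasterAction {X : Type*} [Ring X] [Algebra ℝ X]
    {𝒜 : ℤ → Submodule ℝ X} (B : BVAlgebraStr X 𝒜) (S : X) : Prop :=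
  S ∈ 𝒜 0 ∧ B.Δ S + (1 / 2 : ℝ) • B.bracket S S = 0

/-!
The defining relation says `[Δ, ξ] = -(e_ξ, ·)`. Hence
`[Δ, [ξ, η]] = [[Δ, ξ], η] + [ξ, [Δ, η]] = [η, (e_ξ, ·)] - [ξ, (e_η, ·)]`, and a degree-`0`
derivation `ξ` with `[Δ, ξ] = -(e, ·)` satisfies `[ξ, (e₁, ·)] = (ξ e₁, ·)` for `e₁` of degree
`0`, so `[Δ, [ξ, η]] = -(ξ e_η - η e_ξ, ·)`.
-/

lemma GradedComm.mul_comm_of_mem_zero {X : Type*} [Ring X] [Algebra ℝ X]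
    {𝒜 : ℤ → Submodule ℝ X} (h𝒜 : GradedComm 𝒜) {f g : X} {j : ℤ} (hf : f ∈ 𝒜 0)
    (hg : g ∈ 𝒜 j) : f * g = g * f := by
  simpa using h𝒜 0 j f g hf hg

namespace BVAlgebraStr

variable {X : Type*} [Ring X] [Algebra ℝ X] {𝒜 : ℤ → Submodule ℝ X} (B : BVAlgebraStr X 𝒜)

lemma bracket_of_mem_zero {e g : X} {j : ℤ} (he : e ∈ 𝒜 0) (hg : g ∈ 𝒜 j) :
    B.bracket e g = B.Δ (e * g) - B.Δ e * g - e * B.Δ g := by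
  simpa using B.isBracket 0 j e g he hg

lemma bracket_mul_of_mem_zero [GradedAlgebra 𝒜] {e f g : X} {j : ℤ} (he : e ∈ 𝒜 0)
    (hf : f ∈ 𝒜 0) (hg : g ∈ 𝒜 j) :
    B.bracket e (f * g) = B.bracket e f * g + f * B.bracket e g := by
  have hfg : f * g ∈ 𝒜 j := by simpa using SetLike.mul_mem_graded hf hg
  have hΔe : B.Δ e ∈ 𝒜 1 := by simpa using B.isBVLaplacian.1 0 e he
  have seven : B.Δ (e * f * g) = -(B.Δ e * f * g) - e * B.Δ f * g - e * f * B.Δ g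
      + B.Δ (e * f) * g + f * B.Δ (e * g) + e * B.Δ (f * g) := by
    simpa using B.isBVLaplacian.2.1 0 0 j e f g he hf hg
  rw [B.bracket_of_mem_zero he hfg, B.bracket_of_mem_zero he hf, B.bracket_of_mem_zero he hg,
    ← mul_assoc, seven, mul_sub, mul_sub, ← mul_assoc f, ← mul_assoc f,
    B.grcomm.mul_comm_of_mem_zero hf hΔe, B.grcomm.mul_comm_of_mem_zero hf he]
  noncomm_ring

end BVAlgebraStr

namespace IsInfCanonicalWithJacobian

variable {X : Type*} [Ring X] [Algebra ℝ X] {𝒜 : ℤ → Submodule ℝ X} {B : BVAlgebraStr X 𝒜}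
  {ξ : X →ₗ[ℝ] X} {e : X}

lemma map_Δ (hξ : IsInfCanonicalWithJacobian B ξ e) (f : X) :
    ξ (B.Δ f) = B.Δ (ξ f) + B.bracket e f := by
  rw [eq_comm, ← sub_eq_zero, ← hξ.2.2.2 f]
  abel

/-- Differentiating `Δ(e₁ g) - (Δ e₁) g - e₁ (Δ g)` along `ξ`, the Jacobian terms `(e, ·)`
cancel by the Leibniz rule for `(e, ·)`. -/
lemma map_bracket_of_mem_zero [GradedAlgebra 𝒜] (hξ : IsInfCanonicalWithJacobian B ξ e)
    {e₁ : X} (he₁ : e₁ ∈ 𝒜 0) (g : X) :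
    ξ (B.bracket e₁ g) = B.bracket (ξ e₁) g + B.bracket e₁ (ξ g) := by
  have hΔ := hξ.map_Δ
  obtain ⟨hdeg, hder, he, -⟩ := hξ
  induction g using DirectSum.Decomposition.inductionOn 𝒜 with
  | zero => simp
  | add a b ha hb => simp only [map_add, ha, hb]; abel
  | homogeneous g =>
    obtain ⟨g, hg⟩ := g
    rw [B.bracket_of_mem_zero he₁ hg, B.bracket_of_mem_zero (hdeg 0 e₁ he₁) hg,
      B.bracket_of_mem_zero he₁ (hdeg _ g hg), map_sub, map_sub, hΔ, hder, map_add,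
      hder, hder, hΔ, hΔ, B.bracket_mul_of_mem_zero he he₁ hg, add_mul, mul_add]
    abel

end IsInfCanonicalWithJacobian

lemma LinearMap.commutator_map_mul {R A : Type*} [CommSemiring R] [Ring A] [Algebra R A]
    {ξ η : A →ₗ[R] A} (hξ : ∀ f g, ξ (f * g) = ξ f * g + f * ξ g)
    (hη : ∀ f g, η (f * g) = η f * g + f * η g) (f g : A) :
    (ξ.comp η - η.comp ξ) (f * g) =
      (ξ.comp η - η.comp ξ) f * g + f * (ξ.comp η - η.comp ξ) g := by
  simp only [LinearMap.sub_apply, LinearMap.comp_apply, hξ, hη, map_add]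
  noncomm_ring

theorem stmt8_general {X : Type*} [Ring X] [Algebra ℝ X]
    (𝒜 : ℤ → Submodule ℝ X) [GradedAlgebra 𝒜] (B : BVAlgebraStr X 𝒜)
    (ξ η : X →ₗ[ℝ] X) (eXi eEta : X)
    (hξ : IsInfCanonicalWithJacobian B ξ eXi)
    (hη : IsInfCanonicalWithJacobian B η eEta) :
    IsInfCanonicalWithJacobian B (ξ.comp η - η.comp ξ) (ξ eEta - η eXi) := by
  refine ⟨fun i f hf ↦ ?_, LinearMap.commutator_map_mul hξ.2.1 hη.2.1,
    Submodule.sub_mem _ (hξ.1 0 _ hη.2.2.1) (hη.1 0 _ hξ.2.2.1), fun f ↦ ?_⟩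
  · exact Submodule.sub_mem _ (hξ.1 i _ (hη.1 i f hf)) (hη.1 i _ (hξ.1 i f hf))
  · simp only [LinearMap.sub_apply, LinearMap.comp_apply, map_sub, hξ.map_Δ, hη.map_Δ, map_add,
      hξ.map_bracket_of_mem_zero hη.2.2.1, hη.map_bracket_of_mem_zero hξ.2.2.1]
    abel

/-- the commutator of two infinitesimal canonical maps is an
infinitesimal canonical map with logarithmic Jacobian `ξ(e_η) - η(e_ξ)`. -/
theorem stmt8 {X : Type*} [Ring X] [Algebra ℝ X]
    (𝒜 : ℤ → Submodule ℝ X) [GradedAlgebra 𝒜] (B : BVAlgebraStr X 𝒜)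
    (hX : IsNonsingularBracket B.bracket)
    (ξ η : X →ₗ[ℝ] X) (eXi eEta : X)
    (hξ : IsInfCanonicalWithJacobian B ξ eXi)
    (hη : IsInfCanonicalWithJacobian B η eEta) :
    IsInfCanonicalWithJacobian B (ξ.comp η - η.comp ξ) (ξ eEta - η eXi) :=
  stmt8_general 𝒜 B ξ η eXi eEta hξ hη
end

section
/- Let X and Y be nonsingular BV algebras, let α : X → Y be a canonical map with logarithmic Jacobian r_α, and let S ∈ X be a BV quantum master action of X, i.e. a degree-0 element with Δ_X S + (1/2)(S,S)_X = 0. Then the α-transform α̂S = α(S) + r_α is a degree-0 element of Y satisfying the quantum master equation Δ_Y(α̂S) + (1/2)(α̂S, α̂S)_Y = 0. -/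
/-!
Conjugation by `α` turns `Δ_X` into `Δ_Y + (r, ·)`, so `(Δ_Y + (r, ·))² = 0`. Since `Δ_Y` is
a derivation of the bracket and `2 (r, (r, ·)) = ((r, r), ·)` (Jacobi), this says that
`Δ_Y r + ½ (r, r)` is central; being of degree `1`, nonsingularity forces it to vanish, so
`r` is itself a master action. The same conjugation shows that `α` preserves brackets of degree-`0`
elements, and the master equation for `α S + r` splits into those for `S` and for `r`.
-/

theorem IsNonsingularBracket.eq_zero_of_mem {Y : Type*} [Ring Y] [Algebra ℝ Y]
    {ℬ : ℤ → Submodule ℝ Y} [GradedAlgebra ℬ] {Br : Y →ₗ[ℝ] Y →ₗ[ℝ] Y}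
    (hBr : IsNonsingularBracket Br) {i : ℤ} {c : Y} (hc : c ∈ ℬ i) (hi : i ≠ 0)
    (hcentral : ∀ y, Br y c = 0) : c = 0 := by
  obtain ⟨t, rfl⟩ := (hBr c).mp hcentral
  by_contra hne
  exact hi (DirectSum.degree_eq_of_mem_mem ℬ hc (SetLike.algebraMap_mem_graded ℬ t) hne)

theorem GradedComm.mul_comm_of_mem_zero_s16 {Y : Type*} [Ring Y] [Algebra ℝ Y]
    {ℬ : ℤ → Submodule ℝ Y} (h : GradedComm ℬ) {i : ℤ} {a b : Y} (ha : a ∈ ℬ 0)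
    (hb : b ∈ ℬ i) : a * b = b * a := by
  simpa using h 0 i a b ha hb

namespace BVAlgebraStr

variable {Y : Type*} [Ring Y] [Algebra ℝ Y] {ℬ : ℤ → Submodule ℝ Y}
  (B : BVAlgebraStr Y ℬ)

theorem Δ_mem {i : ℤ} {a : Y} (ha : a ∈ ℬ i) : B.Δ a ∈ ℬ (i + 1) :=
  B.isBVLaplacian.1 i a ha

theorem Δ_Δ (a : Y) : B.Δ (B.Δ a) = 0 :=
  B.isBVLaplacian.2.2.1 a

theorem bracket_eq_of_mem_zero [DirectSum.Decomposition ℬ] {a : Y} (ha : a ∈ ℬ 0) (b : Y) :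
    B.bracket a b = B.Δ (a * b) - B.Δ a * b - a * B.Δ b := by
  induction b using DirectSum.Decomposition.inductionOn ℬ with
  | zero => simp
  | homogeneous b => simpa using B.isBracket 0 _ a b ha b.2
  | add b c hb hc => simp only [map_add, mul_add, hb, hc]; abel

theorem bracket_mem_of_mem_zero [GradedAlgebra ℬ] {j : ℤ} {a b : Y} (ha : a ∈ ℬ 0)
    (hb : b ∈ ℬ j) : B.bracket a b ∈ ℬ (j + 1) := by
  rw [B.bracket_eq_of_mem_zero ha]
  refine sub_mem (sub_mem ?_ ?_) ?_
  · simpa using B.Δ_mem (SetLike.mul_mem_graded ha hb)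
  · simpa [add_comm] using SetLike.mul_mem_graded (B.Δ_mem ha) hb
  · simpa using SetLike.mul_mem_graded ha (B.Δ_mem hb)

theorem bracket_eq_of_mem_one [DirectSum.Decomposition ℬ] {a : Y} (ha : a ∈ ℬ 1) (b : Y) :
    B.bracket a b = -B.Δ (a * b) + B.Δ a * b - a * B.Δ b := by
  induction b using DirectSum.Decomposition.inductionOn ℬ with
  | zero => simp
  | homogeneous b => rw [B.isBracket 1 _ a b ha b.2, zpow_one]; module
  | add b c hb hc => simp only [map_add, mul_add, hb, hc]; abel

theorem bracket_comm_of_mem_zero [DirectSum.Decomposition ℬ] {a b : Y} (ha : a ∈ ℬ 0)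
    (hb : b ∈ ℬ 0) : B.bracket a b = B.bracket b a := by
  rw [B.bracket_eq_of_mem_zero ha, B.bracket_eq_of_mem_zero hb,
    B.grcomm.mul_comm_of_mem_zero_s16 ha hb, B.grcomm.mul_comm_of_mem_zero_s16 ha (B.Δ_mem hb),
    B.grcomm.mul_comm_of_mem_zero_s16 hb (B.Δ_mem ha)]
  abel

theorem bracket_anticomm_of_mem_one [DirectSum.Decomposition ℬ] {c : Y} (hc : c ∈ ℬ 1)
    (y : Y) : B.bracket y c = -B.bracket c y := by
  induction y using DirectSum.Decomposition.inductionOn ℬ with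
  | zero => simp
  | @homogeneous k y =>
    obtain ⟨y, hy⟩ := y
    have hΔc : B.Δ c ∈ ℬ 2 := B.Δ_mem hc
    rw [B.bracket_eq_of_mem_one hc, B.isBracket k 1 y c hy hc, B.grcomm k 1 y c hy hc,
      B.grcomm (k + 1) 1 _ c (B.Δ_mem hy) hc, B.grcomm k 2 y _ hy hΔc, map_smul,
      mul_one, mul_one, zpow_add₀ (by norm_num), zpow_mul, zpow_one]
    rcases Int.even_or_odd k with hk | hk
    · simp only [hk.neg_one_zpow]
      module
    · simp only [hk.neg_one_zpow]
      module
  | add y z hy hz => simp only [map_add, LinearMap.add_apply, hy, hz]; abel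

theorem Δ_bracket_of_mem_zero [DirectSum.Decomposition ℬ] {a : Y} (ha : a ∈ ℬ 0) (b : Y) :
    B.Δ (B.bracket a b) = B.bracket (B.Δ a) b - B.bracket a (B.Δ b) := by
  rw [B.bracket_eq_of_mem_zero ha, B.bracket_eq_of_mem_one (B.Δ_mem ha),
    B.bracket_eq_of_mem_zero ha, map_sub, map_sub]
  simp only [B.Δ_Δ, mul_zero, zero_mul]
  noncomm_ring

theorem bracket_mul_left_of_mem_zero [GradedAlgebra ℬ] {j : ℤ} {a b : Y} (ha : a ∈ ℬ 0)
    (hb : b ∈ ℬ j) (y : Y) : B.bracket (a * b) y = a * B.bracket b y + b * B.bracket a y := by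
  induction y using DirectSum.Decomposition.inductionOn ℬ with
  | zero => simp
  | @homogeneous k y =>
    obtain ⟨y, hy⟩ := y
    have hab : a * b ∈ ℬ j := by simpa using SetLike.mul_mem_graded ha hb
    have hseven := B.isBVLaplacian.2.1 0 j k a b y ha hb hy
    have hbΔa := B.grcomm j 1 b _ hb (B.Δ_mem ha)
    have hba := B.grcomm.mul_comm_of_mem_zero_s16 ha hb
    rw [B.isBracket j k (a * b) y hab hy, B.isBracket j k b y hb hy,
      B.bracket_eq_of_mem_zero ha y]
    simp only [zero_add, one_mul] at hseven
    rw [mul_one] at hbΔa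
    rcases Int.even_or_odd j with hj | hj
    · simp only [hj.neg_one_zpow, zpow_zero, one_smul] at hseven hbΔa ⊢
      linear_combination (norm := noncomm_ring) hseven + hbΔa * y - hba * B.Δ y
    · simp only [hj.neg_one_zpow, zpow_zero, one_smul, neg_smul] at hseven hbΔa ⊢
      linear_combination (norm := noncomm_ring) -hseven + hbΔa * y - hba * B.Δ y
  | add y z hy hz => simp only [map_add, mul_add, hy, hz]; abel

theorem bracket_bracket_self_of_mem_zero [GradedAlgebra ℬ] {r : Y} (hr : r ∈ ℬ 0) (y : Y) :
    B.bracket (B.bracket r r) y = 2 • B.bracket r (B.bracket r y) := by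
  have hrr : r * r ∈ ℬ 0 := by simpa using SetLike.mul_mem_graded hr hr
  have hΔr : B.Δ r ∈ ℬ 1 := B.Δ_mem hr
  -- Expand `(r, r) = Δ(r²) - 2 r Δr` and use that `Δ` is a derivation of the bracket.
  have hΔ_rr := B.Δ_bracket_of_mem_zero hrr y
  have hrr_y :
      B.Δ (B.bracket (r * r) y) = B.Δ (r * B.bracket r y) + B.Δ (r * B.bracket r y) := by
    rw [B.bracket_mul_left_of_mem_zero hr hr, map_add]
  have hrr_Δy := B.bracket_mul_left_of_mem_zero hr hr (B.Δ y)
  have hr_bracket := B.bracket_eq_of_mem_zero hr (B.bracket r y)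
  have hΔ_r := B.Δ_bracket_of_mem_zero hr y
  have hrΔr := B.bracket_mul_left_of_mem_zero hr hΔr y
  rw [B.bracket_eq_of_mem_zero hr r, ← B.grcomm.mul_comm_of_mem_zero_s16 hr hΔr]
  simp only [map_sub, LinearMap.sub_apply]
  linear_combination (norm := noncomm_ring)
    -hΔ_rr + hrr_y + hrr_Δy - 2 * hr_bracket + 2 * r * hΔ_r - 2 * hrΔr

theorem isMasterAction_of_Δ_add_bracket_sq_eq_zero [GradedAlgebra ℬ]
    (hY : IsNonsingularBracket B.bracket) {r : Y} (hr : r ∈ ℬ 0)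
    (hsq : ∀ y, B.Δ (B.Δ y + B.bracket r y) + B.bracket r (B.Δ y + B.bracket r y) = 0) :
    IsMasterAction B r := by
  set c := B.Δ r + (1 / 2 : ℝ) • B.bracket r r
  have hc : c ∈ ℬ 1 :=
    add_mem (B.Δ_mem hr) (Submodule.smul_mem _ _ (B.bracket_mem_of_mem_zero hr hr))
  have hc_bracket (y : Y) : B.bracket c y = 0 := by
    have h := hsq y
    rw [map_add, map_add, B.Δ_Δ, zero_add, B.Δ_bracket_of_mem_zero hr] at h
    simp only [c, map_add, map_smul, LinearMap.add_apply, LinearMap.smul_apply,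
      B.bracket_bracket_self_of_mem_zero hr]
    linear_combination (norm := module) h
  refine ⟨hr, hY.eq_zero_of_mem hc one_ne_zero fun y => ?_⟩
  rw [B.bracket_anticomm_of_mem_one hc, hc_bracket, neg_zero]

end BVAlgebraStr

namespace IsCanonicalWithJacobian

variable {X Y : Type*} [Ring X] [Algebra ℝ X] [Ring Y] [Algebra ℝ Y]
  {𝒜 : ℤ → Submodule ℝ X} {ℬ : ℤ → Submodule ℝ Y} {α : X ≃ₐ[ℝ] Y} {r : Y}

theorem map_Δ {ΔX : X →ₗ[ℝ] X} {ΔY : Y →ₗ[ℝ] Y} {BrY : Y →ₗ[ℝ] Y →ₗ[ℝ] Y}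
    (hcan : IsCanonicalWithJacobian 𝒜 ℬ ΔX ΔY BrY α r) (f : X) :
    α (ΔX f) = ΔY (α f) + BrY r (α f) := by
  linear_combination (norm := module) -hcan.2.2 f

theorem isMasterAction_jacobian [GradedAlgebra ℬ] {BX : BVAlgebraStr X 𝒜}
    {BY : BVAlgebraStr Y ℬ} (hcan : IsCanonicalWithJacobian 𝒜 ℬ BX.Δ BY.Δ BY.bracket α r)
    (hY : IsNonsingularBracket BY.bracket) : IsMasterAction BY r := by
  refine BY.isMasterAction_of_Δ_add_bracket_sq_eq_zero hY hcan.2.1 fun y => ?_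
  obtain ⟨x, rfl⟩ := α.surjective y
  rw [← hcan.map_Δ, ← hcan.map_Δ, BX.Δ_Δ, map_zero]

theorem map_bracket_of_mem_zero [GradedAlgebra 𝒜] [GradedAlgebra ℬ] {BX : BVAlgebraStr X 𝒜}
    {BY : BVAlgebraStr Y ℬ} (hcan : IsCanonicalWithJacobian 𝒜 ℬ BX.Δ BY.Δ BY.bracket α r)
    {f g : X} (hf : f ∈ 𝒜 0) (hg : g ∈ 𝒜 0) :
    α (BX.bracket f g) = BY.bracket (α f) (α g) := by
  have hαf : α f ∈ ℬ 0 := hcan.1 0 f hf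
  have hαg : α g ∈ ℬ 0 := hcan.1 0 g hg
  have hr := hcan.2.1
  -- `(r, ·)` is a derivation on degree-`0` elements, so the Jacobian terms cancel.
  have hr_mul :
      BY.bracket r (α f * α g) = α f * BY.bracket r (α g) + BY.bracket r (α f) * α g := by
    rw [BY.bracket_comm_of_mem_zero hr (by simpa using SetLike.mul_mem_graded hαf hαg),
      BY.bracket_mul_left_of_mem_zero hαf hαg, BY.bracket_comm_of_mem_zero hαf hr,
      BY.bracket_comm_of_mem_zero hαg hr,
      BY.grcomm.mul_comm_of_mem_zero_s16 hαg (BY.bracket_mem_of_mem_zero hr hαf)]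
  rw [BX.bracket_eq_of_mem_zero hf, BY.bracket_eq_of_mem_zero hαf]
  simp only [map_sub, map_mul, hcan.map_Δ, hr_mul]
  noncomm_ring

end IsCanonicalWithJacobian

theorem stmt16_general {X Y : Type*} [Ring X] [Algebra ℝ X] [Ring Y] [Algebra ℝ Y]
    (𝒜 : ℤ → Submodule ℝ X) [GradedAlgebra 𝒜]
    (ℬ : ℤ → Submodule ℝ Y) [GradedAlgebra ℬ]
    (BX : BVAlgebraStr X 𝒜) (BY : BVAlgebraStr Y ℬ)
    (hY : IsNonsingularBracket BY.bracket)
    (α : X ≃ₐ[ℝ] Y) (r : Y)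
    (hcan : IsCanonicalWithJacobian 𝒜 ℬ BX.Δ BY.Δ BY.bracket α r)
    (S : X) (hS : IsMasterAction BX S) :
    (α S + r) ∈ ℬ 0 ∧
    BY.Δ (α S + r) + (1 / 2 : ℝ) • BY.bracket (α S + r) (α S + r) = 0 := by
  obtain ⟨hS₀, hS_master⟩ := hS
  have hαS : α S ∈ ℬ 0 := hcan.1 0 S hS₀
  have hr_master := (hcan.isMasterAction_jacobian hY).2
  have hαS_master :
      BY.Δ (α S) + BY.bracket r (α S) + (1 / 2 : ℝ) • BY.bracket (α S) (α S) = 0 := by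
    simpa only [map_add, map_smul, map_zero, hcan.map_Δ, hcan.map_bracket_of_mem_zero hS₀ hS₀]
      using congrArg α hS_master
  refine ⟨add_mem hαS hcan.2.1, ?_⟩
  simp only [map_add, LinearMap.add_apply, BY.bracket_comm_of_mem_zero hαS hcan.2.1]
  linear_combination (norm := module) hαS_master + hr_master

/-- the α-transform `α̂S = α(S) + r_α` of a master action is a
degree-0 solution of the quantum master equation in `Y`. -/
theorem stmt16 {X Y : Type*} [Ring X] [Algebra ℝ X] [Ring Y] [Algebra ℝ Y]
    (𝒜 : ℤ → Submodule ℝ X) [GradedAlgebra 𝒜]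
    (ℬ : ℤ → Submodule ℝ Y) [GradedAlgebra ℬ]
    (BX : BVAlgebraStr X 𝒜) (BY : BVAlgebraStr Y ℬ)
    (hX : IsNonsingularBracket BX.bracket) (hY : IsNonsingularBracket BY.bracket)
    (α : X ≃ₐ[ℝ] Y) (r : Y)
    (hcan : IsCanonicalWithJacobian 𝒜 ℬ BX.Δ BY.Δ BY.bracket α r)
    (S : X) (hS : IsMasterAction BX S) :
    (α S + r) ∈ ℬ 0 ∧
    BY.Δ (α S + r) + (1 / 2 : ℝ) • BY.bracket (α S + r) (α S + r) = 0 :=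
  stmt16_general 𝒜 ℬ BX BY hY α r hcan S hS
end
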